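/- arXiv:0707.4618 — 2 statements merged into one kernel-verified Lean document; each statement's English description precedes it below -/
import Mathlib

section
/- Let M be a matroid on the finite ground set N = {1,…,n}, let w_1,…,w_d ∈ ℤ^n be weight vectors, and let f : ℝ^d → ℝ. For S ⊆ N let f*(S) denote the minimum of f(W(B)) over all maximal independent subsets B of S (the bases of the restriction of M to S), and set f* := f*(N). If a subset S ⊆ N satisfies: (i) rank(S) = rank(M), (ii) f*(S) = f*, and (iii) for every j ∈ S either rank(S∖{j}) < rank(M) or f*(S∖{j}) ≠ f*, then S itself is a base of M and f(W(S)) = f*. -/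
/-- A matroid on ground set `{1,…,n}` (modeled as `Fin n`), given by a nonempty
family of bases satisfying the base exchange axiom. -/
structure MatroidB (n : ℕ) where
  bases : Finset (Finset (Fin n))
  nonempty : bases.Nonempty
  exchange : ∀ B₁ ∈ bases, ∀ B₂ ∈ bases, ∀ x ∈ B₁ \ B₂,
    ∃ y ∈ B₂ \ B₁, insert y (B₁.erase x) ∈ bases

/-- A set is independent if it is contained in a base. -/
def MatroidB.Indep {n : ℕ} (M : MatroidB n) (I : Finset (Fin n)) : Prop :=
  ∃ B ∈ M.bases, I ⊆ B

open Classical in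
/-- The rank of `S` is the maximum cardinality of an independent subset of `S`. -/
noncomputable def MatroidB.rank {n : ℕ} (M : MatroidB n) (S : Finset (Fin n)) : ℕ :=
  (S.powerset.filter fun I => M.Indep I).sup Finset.card

/-- `B` is a base of the restriction of `M` to `S`: a maximal independent subset of `S`. -/
def MatroidB.RestBase {n : ℕ} (M : MatroidB n) (S B : Finset (Fin n)) : Prop :=
  B ⊆ S ∧ M.Indep B ∧ ∀ I : Finset (Fin n), I ⊆ S → M.Indep I → B ⊆ I → I = B

namespace MatroidB

variable {n : ℕ} (M : MatroidB n)

lemma base_eq_of_subset {B₁ B₂ : Finset (Fin n)} (h₁ : B₁ ∈ M.bases)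
    (h₂ : B₂ ∈ M.bases) (hsub : B₁ ⊆ B₂) : B₁ = B₂ := by
  refine Finset.Subset.antisymm hsub fun x hx => ?_
  by_contra hxB
  obtain ⟨y, hy, -⟩ := M.exchange B₂ h₂ B₁ h₁ x (Finset.mem_sdiff.2 ⟨hx, hxB⟩)
  exact (Finset.mem_sdiff.1 hy).2 (hsub (Finset.mem_sdiff.1 hy).1)

lemma card_base_eq_aux : ∀ k : ℕ, ∀ B₁ ∈ M.bases, ∀ B₂ ∈ M.bases,
    (B₁ \ B₂).card = k → B₁.card = B₂.card := by
  intro k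
  induction k using Nat.strong_induction_on with
  | _ k ih =>
    intro B₁ h₁ B₂ h₂ hk
    rcases Finset.eq_empty_or_nonempty (B₁ \ B₂) with he | ⟨x, hx⟩
    · rw [M.base_eq_of_subset h₁ h₂ (Finset.sdiff_eq_empty_iff_subset.1 he)]
    · obtain ⟨y, hy, hB'⟩ := M.exchange B₁ h₁ B₂ h₂ x hx
      obtain ⟨hx1, hx2⟩ := Finset.mem_sdiff.1 hx
      obtain ⟨hy1, hy2⟩ := Finset.mem_sdiff.1 hy
      have hyx : y ∉ B₁.erase x := fun h => hy2 (Finset.mem_of_mem_erase h)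
      have hcard : (insert y (B₁.erase x)).card = B₁.card := by
        rw [Finset.card_insert_of_notMem hyx, Finset.card_erase_of_mem hx1]
        exact Nat.succ_pred_eq_of_pos (Finset.card_pos.2 ⟨x, hx1⟩)
      have hsub : insert y (B₁.erase x) \ B₂ ⊆ (B₁ \ B₂).erase x := by
        intro z hz
        obtain ⟨hz1, hz2⟩ := Finset.mem_sdiff.1 hz
        rcases Finset.mem_insert.1 hz1 with rfl | hz1
        · exact absurd hy1 hz2
        · exact Finset.mem_erase.2 ⟨(Finset.mem_erase.1 hz1).1,
            Finset.mem_sdiff.2 ⟨Finset.mem_of_mem_erase hz1, hz2⟩⟩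
      have hlt : (insert y (B₁.erase x) \ B₂).card < k := by
        calc (insert y (B₁.erase x) \ B₂).card ≤ ((B₁ \ B₂).erase x).card :=
              Finset.card_le_card hsub
          _ < (B₁ \ B₂).card := Finset.card_erase_lt_of_mem hx
          _ = k := hk
      rw [← hcard]
      exact ih _ hlt _ hB' _ h₂ rfl

lemma card_base_eq {B₁ B₂ : Finset (Fin n)} (h₁ : B₁ ∈ M.bases) (h₂ : B₂ ∈ M.bases) :
    B₁.card = B₂.card := M.card_base_eq_aux _ B₁ h₁ B₂ h₂ rfl

/-- Independence augmentation. -/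
lemma augment {I J : Finset (Fin n)} (hI : M.Indep I) (hJ : M.Indep J)
    (hcard : I.card < J.card) : ∃ x ∈ J \ I, M.Indep (insert x I) := by
  classical
  obtain ⟨BJ, hBJ, hJBJ⟩ := hJ
  -- choose a base containing I minimizing |B \ (I ∪ BJ)|
  obtain ⟨B, hB⟩ := hI
  set P : Finset (Finset (Fin n)) := M.bases.filter (fun B => I ⊆ B) with hP
  have hPne : P.Nonempty := ⟨B, Finset.mem_filter.2 ⟨hB.1, hB.2⟩⟩
  obtain ⟨BI, hBImem, hBImin⟩ := P.exists_min_image (fun B => (B \ (I ∪ BJ)).card) hPne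
  obtain ⟨hBIb, hIBI⟩ := Finset.mem_filter.1 hBImem
  have hkey : BI \ (I ∪ BJ) = ∅ := by
    by_contra hne
    obtain ⟨x, hx⟩ := Finset.nonempty_iff_ne_empty.2 hne
    obtain ⟨hx1, hx2⟩ := Finset.mem_sdiff.1 hx
    have hxI : x ∉ I := fun h => hx2 (Finset.mem_union_left _ h)
    have hxBJ : x ∉ BJ := fun h => hx2 (Finset.mem_union_right _ h)
    obtain ⟨y, hy, hB'⟩ := M.exchange BI hBIb BJ hBJ x (Finset.mem_sdiff.2 ⟨hx1, hxBJ⟩)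
    obtain ⟨hy1, hy2⟩ := Finset.mem_sdiff.1 hy
    have hIB' : I ⊆ insert y (BI.erase x) := fun z hz =>
      Finset.mem_insert.2 (Or.inr (Finset.mem_erase.2 ⟨fun h => hxI (h ▸ hz), hIBI hz⟩))
    have hmem' : insert y (BI.erase x) ∈ P := Finset.mem_filter.2 ⟨hB', hIB'⟩
    have hsub : insert y (BI.erase x) \ (I ∪ BJ) ⊆ (BI \ (I ∪ BJ)).erase x := by
      intro z hz
      obtain ⟨hz1, hz2⟩ := Finset.mem_sdiff.1 hz
      rcases Finset.mem_insert.1 hz1 with rfl | hz1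
      · exact absurd (Finset.mem_union_right _ hy1) hz2
      · exact Finset.mem_erase.2 ⟨(Finset.mem_erase.1 hz1).1,
          Finset.mem_sdiff.2 ⟨Finset.mem_of_mem_erase hz1, hz2⟩⟩
    have hlt : (insert y (BI.erase x) \ (I ∪ BJ)).card < (BI \ (I ∪ BJ)).card :=
      lt_of_le_of_lt (Finset.card_le_card hsub) (Finset.card_erase_lt_of_mem hx)
    exact absurd (hBImin _ hmem') (not_le.2 hlt)
  have hBIsub : BI ⊆ I ∪ BJ := Finset.sdiff_eq_empty_iff_subset.1 hkey
  -- B_I \ I ⊆ BJ and |BI \ I| > |BJ \ J|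
  have h1 : BI \ I ⊆ BJ := by
    intro z hz
    obtain ⟨hz1, hz2⟩ := Finset.mem_sdiff.1 hz
    rcases Finset.mem_union.1 (hBIsub hz1) with h | h
    · exact absurd h hz2
    · exact h
  have hcardBI : (BI \ I).card = BI.card - I.card := Finset.card_sdiff_of_subset hIBI
  have hcardBJ : (BJ \ J).card = BJ.card - J.card := Finset.card_sdiff_of_subset hJBJ
  have hIle : I.card ≤ BI.card := Finset.card_le_card hIBI
  have hJle : J.card ≤ BJ.card := Finset.card_le_card hJBJ
  have heq : BI.card = BJ.card := M.card_base_eq hBIb hBJ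
  have hgt : (BJ \ J).card < (BI \ I).card := by omega
  have : ¬ (BI \ I ⊆ BJ \ J) := fun h => absurd (Finset.card_le_card h) (not_le.2 hgt)
  obtain ⟨x, hx1, hx2⟩ := Finset.not_subset.1 this
  obtain ⟨hxBI, hxI⟩ := Finset.mem_sdiff.1 hx1
  have hxJ : x ∈ J := by
    by_contra h
    exact hx2 (Finset.mem_sdiff.2 ⟨h1 hx1, h⟩)
  refine ⟨x, Finset.mem_sdiff.2 ⟨hxJ, hxI⟩, BI, hBIb, ?_⟩
  exact Finset.insert_subset hxBI hIBI

open Classical in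
lemma le_rank {S I : Finset (Fin n)} (hIS : I ⊆ S) (hI : M.Indep I) :
    I.card ≤ M.rank S :=
  Finset.le_sup (Finset.mem_filter.2 ⟨Finset.mem_powerset.2 hIS, hI⟩)

open Classical in
lemma exists_rank {S : Finset (Fin n)} :
    ∃ I ⊆ S, M.Indep I ∧ I.card = M.rank S := by
  obtain ⟨B, hB⟩ := M.nonempty
  have hne : (S.powerset.filter fun I => M.Indep I).Nonempty :=
    ⟨∅, Finset.mem_filter.2 ⟨Finset.mem_powerset.2 (Finset.empty_subset S),
      B, hB, Finset.empty_subset B⟩⟩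
  obtain ⟨I, hImem, hIeq⟩ := Finset.exists_mem_eq_sup _ hne Finset.card
  obtain ⟨hI1, hI2⟩ := Finset.mem_filter.1 hImem
  exact ⟨I, Finset.mem_powerset.1 hI1, hI2, hIeq.symm⟩

/-- A maximal independent subset of S has cardinality rank S. -/
lemma restBase_card {S B : Finset (Fin n)} (h : M.RestBase S B) :
    B.card = M.rank S := by
  obtain ⟨hBS, hBI, hmax⟩ := h
  refine le_antisymm (M.le_rank hBS hBI) ?_
  obtain ⟨I, hIS, hI, hIc⟩ := M.exists_rank (S := S)
  by_contra h
  have hlt : B.card < I.card := by omega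
  obtain ⟨x, hx, hind⟩ := M.augment hBI hI hlt
  obtain ⟨hxI, hxB⟩ := Finset.mem_sdiff.1 hx
  have := hmax (insert x B) (Finset.insert_subset (hIS hxI) hBS) hind
    (Finset.subset_insert _ _)
  exact hxB (this ▸ Finset.mem_insert_self x B)

/-- rank univ equals the cardinality of any base. -/
lemma rank_univ_eq {B : Finset (Fin n)} (hB : B ∈ M.bases) :
    M.rank Finset.univ = B.card := by
  refine le_antisymm ?_ (M.le_rank (Finset.subset_univ B) ⟨B, hB, le_refl B⟩)
  obtain ⟨I, -, ⟨B', hB', hIB'⟩, hIc⟩ := M.exists_rank (S := Finset.univ)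
  calc M.rank Finset.univ = I.card := hIc.symm
    _ ≤ B'.card := Finset.card_le_card hIB'
    _ = B.card := M.card_base_eq hB' hB

/-- An independent set of full rank is a base. -/
lemma mem_bases_of_card {I : Finset (Fin n)} (hI : M.Indep I)
    (hc : I.card = M.rank Finset.univ) : I ∈ M.bases := by
  obtain ⟨B, hB, hIB⟩ := hI
  have : I = B := Finset.eq_of_subset_of_card_le hIB
    (by rw [hc, M.rank_univ_eq hB])
  exact this ▸ hB

/-- An independent set of full rank is a restriction base of univ. -/
lemma restBase_univ_of_card {I : Finset (Fin n)} (hI : M.Indep I)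
    (hc : I.card = M.rank Finset.univ) : M.RestBase Finset.univ I := by
  refine ⟨Finset.subset_univ I, hI, fun J hJS hJ hIJ => ?_⟩
  refine (Finset.eq_of_subset_of_card_le hIJ ?_).symm
  rw [hc]
  exact M.le_rank hJS hJ

end MatroidB

theorem stmt0 {n d : ℕ} (M : MatroidB n) (w : Fin d → Fin n → ℤ)
    (f : (Fin d → ℝ) → ℝ) (fstar : Finset (Fin n) → ℝ)
    (hfstar : ∀ S : Finset (Fin n),
      IsLeast {r : ℝ | ∃ B : Finset (Fin n), M.RestBase S B ∧
        r = f (fun i => ((∑ j ∈ B, w i j : ℤ) : ℝ))} (fstar S))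
    (S : Finset (Fin n))
    (h1 : M.rank S = M.rank Finset.univ)
    (h2 : fstar S = fstar Finset.univ)
    (h3 : ∀ j ∈ S, M.rank (S.erase j) < M.rank Finset.univ ∨
      fstar (S.erase j) ≠ fstar Finset.univ) :
    S ∈ M.bases ∧
      f (fun i => ((∑ j ∈ S, w i j : ℤ) : ℝ)) = fstar Finset.univ := by
  classical
  obtain ⟨B, hBrest, hBval⟩ := (hfstar S).1
  -- key claim : S = B
  have hSB : S = B := by
    by_contra hne
    have hBS := hBrest.1
    obtain ⟨j, hjS, hjB⟩ := Finset.not_subset.1 fun h =>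
      hne (Finset.Subset.antisymm h hBS)
    -- B is a restriction base of S.erase j
    have hrest' : M.RestBase (S.erase j) B := by
      refine ⟨fun z hz => Finset.mem_erase.2 ⟨fun h => hjB (h ▸ hz), hBS hz⟩,
        hBrest.2.1, fun I hIS hI hBI => hBrest.2.2 I (hIS.trans (Finset.erase_subset _ _)) hI hBI⟩
    have hrank' : M.rank (S.erase j) = M.rank Finset.univ := by
      rw [← M.restBase_card hrest', M.restBase_card hBrest, h1]
    -- fstar (S.erase j) = fstar univ
    have hle : fstar (S.erase j) ≤ fstar Finset.univ := by
      rw [← h2, hBval]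
      exact (hfstar (S.erase j)).2 ⟨B, hrest', rfl⟩
    have hge : fstar Finset.univ ≤ fstar (S.erase j) := by
      obtain ⟨B', hB'rest, hB'val⟩ := (hfstar (S.erase j)).1
      have hB'card : B'.card = M.rank Finset.univ := by
        rw [← hrank']; exact M.restBase_card hB'rest
      have := M.restBase_univ_of_card hB'rest.2.1 hB'card
      rw [hB'val]
      exact (hfstar Finset.univ).2 ⟨B', this, rfl⟩
    rcases h3 j hjS with h | h
    · omega
    · exact h (le_antisymm hle hge)
  subst hSB
  have hScard : S.card = M.rank Finset.univ := by
    rw [M.restBase_card hBrest, h1]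
  exact ⟨M.mem_bases_of_card hBrest.2.1 hScard, by rw [← hBval, h2]⟩
end

section
/- Let K = {1,…,k} be partitioned into nonempty parts K_1,…,K_r, let K̄ = {1̄,…,k̄} be a disjoint copy of K with K̄_i the copy of K_i, and let M_{r,k} be the matroid on ground set K ∪ K̄ whose bases are exactly the subsets B ⊆ K ∪ K̄ with |B ∩ (K_i ∪ K̄_i)| = |K_i| for every i = 1,…,r (the direct sum of the uniform matroids U_{k_i, 2k_i}). Let a_0, a_1, …, a_k ∈ ℕ and define the weight w by w_j := a_j for j ∈ K and w_{j̄} := 0 for j̄ ∈ K̄. Then M_{r,k} has a base B with Σ_{j∈B} w_j = a_0 if and only if there exists a subset S ⊆ K with Σ_{j∈S} a_j = a_0. -/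
open Finset

theorem sum_elim_zero_eq_sum_toLeft {α β M : Type*} [AddCommMonoid M] (f : α → M)
    (B : Finset (α ⊕ β)) :
    ∑ x ∈ B, Sum.elim f (fun _ => 0) x = ∑ j ∈ B.toLeft, f j := by
  conv_lhs => rw [← toLeft_disjSum_toRight (u := B)]
  simp [sum_disjSum]

theorem card_filter_disjSum_compl {α γ : Type*} [Fintype α] [DecidableEq α] [DecidableEq γ]
    (f : α → γ) (S : Finset α) (i : γ) :
    ((S.disjSum Sᶜ).filter fun x => Sum.elim f f x = i).card =
      (univ.filter fun j => f j = i).card := by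
  simp only [card_filter, sum_disjSum, Sum.elim_inl, Sum.elim_inr]
  exact sum_add_sum_compl S _

/-- The ground set `K ∪ K̄` is `Fin k ⊕ Fin k`, and the part `K_i` is the fibre `π⁻¹(i)`.
A subset `S ⊆ K` extends to the base `S ∪ (K \ S)̄` of the same weight, and the weight of any
base is that of its part in `K`. -/
theorem stmt5_general {k r : ℕ} (π : Fin k → Fin r)
    (a : Fin k → ℕ) (a0 : ℕ) :
    (∃ B : Finset (Fin k ⊕ Fin k),
      (∀ i : Fin r,
        (B.filter fun x => Sum.elim π π x = i).card =
          (Finset.univ.filter fun j => π j = i).card) ∧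
      ∑ x ∈ B, Sum.elim a (fun _ => 0) x = a0) ↔
    (∃ S : Finset (Fin k), ∑ j ∈ S, a j = a0) := by
  constructor
  · rintro ⟨B, -, hB⟩
    exact ⟨B.toLeft, by rw [← hB, sum_elim_zero_eq_sum_toLeft]⟩
  · rintro ⟨S, hS⟩
    refine ⟨S.disjSum Sᶜ, card_filter_disjSum_compl π S, ?_⟩
    rw [sum_elim_zero_eq_sum_toLeft, toLeft_disjSum, hS]

/-- The subset-sum reduction for the matroids `M_{r,k}`. The ground set `K ∪ K̄` is modeled
as `Fin k ⊕ Fin k` (`Sum.inl` for `K`, `Sum.inr` for the disjoint copy `K̄`). The partition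
of `K` into nonempty parts `K_1,…,K_r` is given by a surjective map `π : Fin k → Fin r`
(`K_i = π⁻¹(i)`), and the bases of `M_{r,k}` are exactly the subsets `B` of the ground set
with `|B ∩ (K_i ∪ K̄_i)| = |K_i|` for every `i`. With weights `w_j := a_j` for `j ∈ K` and
`w_{j̄} := 0` for `j̄ ∈ K̄`, the matroid `M_{r,k}` has a base `B` with `∑_{j∈B} w_j = a_0`
iff there is a subset `S ⊆ K` with `∑_{j∈S} a_j = a_0`. -/
theorem stmt5 {k r : ℕ} (hr : 0 < r) (π : Fin k → Fin r) (hπ : Function.Surjective π)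
    (a : Fin k → ℕ) (a0 : ℕ) :
    (∃ B : Finset (Fin k ⊕ Fin k),
      (∀ i : Fin r,
        (B.filter fun x => Sum.elim π π x = i).card =
          (Finset.univ.filter fun j => π j = i).card) ∧
      ∑ x ∈ B, Sum.elim a (fun _ => 0) x = a0) ↔
    (∃ S : Finset (Fin k), ∑ j ∈ S, a j = a0) :=
  stmt5_general π a a0
end
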